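/- Let k be a field, let k̄ be a separable closure of k (IsSepClosure k k̄), and let A and B be ind-étale commutative k-algebras. A k-algebra homomorphism f : A → B is surjective if and only if the induced map of prime spectra Spec(k̄ ⊗_k B) → Spec(k̄ ⊗_k A) — the comap of the base-changed k̄-algebra homomorphism id_{k̄} ⊗ f : k̄ ⊗_k A → k̄ ⊗_k B — is injective. -/

import Mathlib

/-!
Let `kbar` be a separable closure of a field `k` and let `A`, `B` be ind-étale commutative
`k`-algebras (every element is a root of a nonzero separable polynomial over `k`).
A `k`-algebra homomorphism `f : A → B` is surjective if and only if the induced map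
`Spec(kbar ⊗_k B) → Spec(kbar ⊗_k A)` on prime spectra is injective.
-/

open TensorProduct

/-- A commutative `k`-algebra is ind-étale if every element is a root of a nonzero
separable polynomial with coefficients in `k`. -/
def IsIndEtale (k A : Type*) [Field k] [CommRing A] [Algebra k A] : Prop :=
  ∀ a : A, ∃ p : Polynomial k, p ≠ 0 ∧ p.Separable ∧ Polynomial.aeval a p = 0

/-!
Over a separable closure `kbar`, every `1 ⊗ b ∈ kbar ⊗ B` is killed by a split separable
polynomial, and evaluating the Lagrange basis at its roots writes `1 ⊗ b` as a `kbar`-combination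
of idempotents; so `kbar ⊗ B` is spanned by idempotents. The map `kbar ⊗ A → kbar ⊗ B` is
integral, and by lying over an injective map on spectra lifts every idempotent `e`: the
contractions of `(e)` and `(1 - e)` cannot lie in a common maximal ideal. Hence `id ⊗ f` is
surjective, and so is `f` because `kbar` is faithfully flat over `k`.
-/

open Polynomial

theorem Polynomial.Splits.dvd_of_forall_isRoot {K : Type*} [Field K] {q g : K[X]}
    (hs : q.Splits) (hsep : q.Separable) (h : ∀ a ∈ q.roots, g.IsRoot a) : q ∣ g := by
  rcases eq_or_ne g 0 with rfl | hg
  · exact dvd_zero q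
  refine hs.dvd_of_roots_le_roots hsep.ne_zero ?_
  rw [Multiset.le_iff_subset (nodup_roots hsep)]
  exact fun a ha => (mem_roots hg).mpr (h a ha)

theorem mem_span_isIdempotentElem_of_aeval_eq_zero {K S : Type*} [Field K] [CommRing S]
    [Algebra K S] {q : K[X]} (hs : q.Splits) (hsep : q.Separable) {x : S}
    (hx : aeval x q = 0) : x ∈ Submodule.span K {e : S | IsIdempotentElem e} := by
  classical
  set t := q.roots.toFinset
  have hinj : Set.InjOn (@id K) t := Set.injOn_id _
  have aeval_eq_zero : ∀ g : K[X], (∀ a ∈ t, g.IsRoot a) → aeval x g = 0 := by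
    intro g hg
    obtain ⟨r, rfl⟩ :=
      hs.dvd_of_forall_isRoot hsep fun a ha => hg a (Multiset.mem_toFinset.mpr ha)
    rw [map_mul, hx, zero_mul]
  have eval_basis : ∀ c ∈ t, ∀ a ∈ t,
      (Lagrange.basis t (@id K) c).eval a = if a = c then 1 else 0 := by
    intro c hc a ha
    by_cases hac : a = c
    · rw [if_pos hac, hac]; exact Lagrange.eval_basis_self (v := @id K) hinj hc
    · rw [if_neg hac]; exact Lagrange.eval_basis_of_ne (v := @id K) (Ne.symm hac) ha
  have hidem : ∀ c ∈ t, IsIdempotentElem (aeval x (Lagrange.basis t (@id K) c)) := by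
    intro c hc
    rw [IsIdempotentElem, ← map_mul, ← sub_eq_zero, ← map_sub]
    refine aeval_eq_zero _ fun a ha => ?_
    simp only [IsRoot, eval_sub, eval_mul, eval_basis c hc a ha]
    split_ifs <;> simp
  have hx_sum : x = ∑ c ∈ t, c • aeval x (Lagrange.basis t (@id K) c) := by
    rw [← sub_eq_zero]
    have := aeval_eq_zero (X - ∑ c ∈ t, C c * Lagrange.basis t (@id K) c) fun a ha => by
      simp only [IsRoot, eval_sub, eval_X, eval_finsetSum, eval_mul, eval_C]
      rw [Finset.sum_congr rfl fun c hc => by rw [eval_basis c hc a ha]]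
      simp [ha]
    simpa [Algebra.smul_def] using this
  rw [hx_sum]
  exact Submodule.sum_mem _ fun c hc => Submodule.smul_mem _ _ (Submodule.subset_span (hidem c hc))

theorem isIdempotentElem_mem_range_of_comap_injective {R S : Type*} [CommRing R] [CommRing S]
    [Algebra R S] [Algebra.IsIntegral R S]
    (hinj : Function.Injective (PrimeSpectrum.comap (algebraMap R S)))
    {e : S} (he : IsIdempotentElem e) : e ∈ (algebraMap R S).range := by
  have hcomax : (Ideal.span {e}).comap (algebraMap R S) ⊔
      (Ideal.span {1 - e}).comap (algebraMap R S) = ⊤ := by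
    by_contra hne
    obtain ⟨m, hm, hle⟩ := Ideal.exists_le_maximal _ hne
    obtain ⟨P, hPe, hP, hPm⟩ :=
      Ideal.exists_ideal_over_prime_of_isIntegral m _ (le_sup_left.trans hle)
    obtain ⟨Q, hQe, hQ, hQm⟩ :=
      Ideal.exists_ideal_over_prime_of_isIntegral m _ (le_sup_right.trans hle)
    have hPQ : P = Q := congrArg PrimeSpectrum.asIdeal
      (hinj (a₁ := ⟨P, hP⟩) (a₂ := ⟨Q, hQ⟩) (PrimeSpectrum.ext (hPm.trans hQm.symm)))
    have h1 : e + (1 - e) ∈ P := P.add_mem (hPe (Ideal.mem_span_singleton_self e))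
      (hPQ ▸ hQe (Ideal.mem_span_singleton_self _))
    exact hP.ne_top ((Ideal.eq_top_iff_one P).mpr (by simpa using h1))
  obtain ⟨i, hi, j, hj, hij⟩ :=
    Submodule.mem_sup.mp (hcomax ▸ Submodule.mem_top (x := (1 : R)))
  obtain ⟨a, ha⟩ := Ideal.mem_span_singleton'.mp (Ideal.mem_comap.mp hi)
  obtain ⟨b, hb⟩ := Ideal.mem_span_singleton'.mp (Ideal.mem_comap.mp hj)
  have hsum : algebraMap R S i + algebraMap R S j = 1 := by rw [← map_add, hij, map_one]
  refine ⟨i, ?_⟩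
  -- `i` maps into `e S` and `j` into `(1 - e) S`, so `e = e * (i + j) = i`.
  linear_combination (e - 1) * ha + e * hb + e * hsum + (b - a) * he.eq

theorem AlgHom.surjective_of_comap_injective {K R S : Type*} [CommRing K] [CommRing R]
    [CommRing S] [Algebra K R] [Algebra K S] [Algebra.IsIntegral K S] (φ : R →ₐ[K] S)
    (hspan : Submodule.span K {e : S | IsIdempotentElem e} = ⊤)
    (hinj : Function.Injective (PrimeSpectrum.comap φ.toRingHom)) :
    Function.Surjective φ := by
  let := φ.toRingHom.toAlgebra
  have hcomp : φ.toRingHom.comp (algebraMap K R) = algebraMap K S := φ.comp_algebraMap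
  have : Algebra.IsIntegral R S :=
    ⟨RingHom.IsIntegral.tower_top (algebraMap K R) φ.toRingHom
      (hcomp ▸ algebraMap_isIntegral_iff.mpr ‹_›)⟩
  have hrange : Submodule.span K {e : S | IsIdempotentElem e} ≤ LinearMap.range φ.toLinearMap :=
    Submodule.span_le.mpr fun e he => isIdempotentElem_mem_range_of_comap_injective hinj he
  exact LinearMap.range_eq_top.mp (top_le_iff.mp (hspan ▸ hrange))

theorem IsIndEtale.isIntegral {k A : Type*} [Field k] [CommRing A] [Algebra k A]
    (hA : IsIndEtale k A) : Algebra.IsIntegral k A :=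
  ⟨fun a => have ⟨p, hp0, _, hpa⟩ := hA a; IsAlgebraic.isIntegral ⟨p, hp0, hpa⟩⟩

theorem IsIndEtale.span_isIdempotentElem_tensorProduct {k K A : Type*} [Field k] [Field K]
    [Algebra k K] [IsSepClosed K] [CommRing A] [Algebra k A] (hA : IsIndEtale k A) :
    Submodule.span K {e : K ⊗[k] A | IsIdempotentElem e} = ⊤ := by
  refine eq_top_iff.mpr fun z _ => z.induction_on (Submodule.zero_mem _) (fun c a => ?_)
    fun _ _ => Submodule.add_mem _
  obtain ⟨p, -, hp, hpa⟩ := hA a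
  have h1a : aeval ((1 : K) ⊗ₜ[k] a) (p.map (algebraMap k K)) = 0 := by
    rw [aeval_map_algebraMap, ← Algebra.TensorProduct.includeRight_apply, aeval_algHom_apply,
      hpa, map_zero]
  rw [← mul_one c, ← smul_eq_mul, ← smul_tmul']
  exact Submodule.smul_mem _ _ (mem_span_isIdempotentElem_of_aeval_eq_zero
    (IsSepClosed.splits_codomain p hp) hp.map h1a)

theorem surjective_iff_comap_injective_general
    (k kbar A B : Type*) [Field k] [Field kbar] [Algebra k kbar] [IsSepClosure k kbar]
    [CommRing A] [Algebra k A] [CommRing B] [Algebra k B]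
    (hB : IsIndEtale k B) (f : A →ₐ[k] B) :
    Function.Surjective f ↔
      Function.Injective
        (PrimeSpectrum.comap
          (Algebra.TensorProduct.map (AlgHom.id k kbar) f).toRingHom :
            PrimeSpectrum (kbar ⊗[k] B) → PrimeSpectrum (kbar ⊗[k] A)) := by
  have : IsSepClosed kbar := IsSepClosure.sep_closed k
  have := hB.isIntegral
  rw [← AlgHom.coe_toLinearMap,
    ← Module.FaithfullyFlat.lTensor_surjective_iff_surjective k kbar f.toLinearMap]
  constructor
  · exact fun h => PrimeSpectrum.comap_injective_of_surjective _ h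
  · exact (Algebra.TensorProduct.map (AlgHom.id kbar kbar) f).surjective_of_comap_injective
      hB.span_isIdempotentElem_tensorProduct

theorem surjective_iff_comap_injective
    (k kbar A B : Type*) [Field k] [Field kbar] [Algebra k kbar] [IsSepClosure k kbar]
    [CommRing A] [Algebra k A] [CommRing B] [Algebra k B]
    (hA : IsIndEtale k A) (hB : IsIndEtale k B) (f : A →ₐ[k] B) :
    Function.Surjective f ↔
      Function.Injective
        (PrimeSpectrum.comap
          (Algebra.TensorProduct.map (AlgHom.id k kbar) f).toRingHom :
            PrimeSpectrum (kbar ⊗[k] B) → PrimeSpectrum (kbar ⊗[k] A)) :=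
  surjective_iff_comap_injective_general k kbar A B hB f
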